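/- arXiv:math/0607603 — 4 statements merged into one kernel-verified Lean document; each statement's English description precedes it below -/
import Mathlib

section
/- With γ > 0 and φ_γ(x) = Σ_{n=0}^∞ (x^n/n!) binom(n+γ,n)^{-1}, we have e^{-x} x^γ φ_γ(x) → γ·Γ(γ) as x → +∞. -/
open MeasureTheory Real Filter Set intervalIntegral

private lemma gamma_prod_aux (γ : ℝ) (hγ : 0 < γ) (n : ℕ) :
    Real.Gamma ((n : ℝ) + γ + 1) = Real.Gamma γ * ∏ j ∈ Finset.range (n + 1), (γ + j) := by
  induction n with
  | zero => simp [Real.Gamma_add_one hγ.ne', mul_comm]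
  | succ n ih =>
      have h : ((n + 1 : ℕ) : ℝ) + γ + 1 = ((n : ℝ) + γ + 1) + 1 := by push_cast; ring
      rw [h, Real.Gamma_add_one (by positivity), ih,
        Finset.prod_range_succ (fun j => γ + (j : ℝ)) (n + 1)]
      push_cast; ring

private lemma beta_eval_aux (γ : ℝ) (hγ : 0 < γ) (n : ℕ) :
    ∫ s in (0:ℝ)..1, s ^ (γ - 1) * (1 - s) ^ n
      = (n.factorial : ℝ) / ∏ j ∈ Finset.range (n + 1), (γ + j) := by
  have h := Complex.betaIntegral_eval_nat_add_one_right (u := (γ : ℂ)) (by simpa using hγ) n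
  have key : Complex.betaIntegral (γ : ℂ) ((n : ℂ) + 1)
      = ((∫ s in (0:ℝ)..1, s ^ (γ - 1) * (1 - s) ^ n : ℝ) : ℂ) := by
    rw [Complex.betaIntegral, ← intervalIntegral.integral_ofReal]
    apply intervalIntegral.integral_congr
    intro s hs
    dsimp only
    rw [Set.uIcc_of_le (by norm_num : (0:ℝ) ≤ 1)] at hs
    have hs0 : (0:ℝ) ≤ s := hs.1
    have hs1 : (0:ℝ) ≤ 1 - s := by linarith [hs.2]
    have e1 : ((n : ℂ) + 1) - 1 = ((n : ℕ) : ℂ) := by ring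
    rw [e1, Complex.cpow_natCast]
    push_cast [Complex.ofReal_cpow hs0]
    ring
  rw [key] at h
  have hR : ((n.factorial : ℝ) / ∏ j ∈ Finset.range (n + 1), (γ + j) : ℝ)
      = ((n.factorial : ℂ) / ∏ j ∈ Finset.range (n + 1), ((γ : ℂ) + j) : ℂ).re := by
    rw [show ((n.factorial : ℂ) / ∏ j ∈ Finset.range (n + 1), ((γ : ℂ) + j) : ℂ)
        = (((n.factorial : ℝ) / ∏ j ∈ Finset.range (n + 1), (γ + j) : ℝ) : ℂ) by push_cast; ring]
    rw [Complex.ofReal_re]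
  rw [hR, ← h, Complex.ofReal_re]

private lemma beta_intable_aux (γ : ℝ) (hγ : 0 < γ) (n : ℕ) :
    IntervalIntegrable (fun s : ℝ => s ^ (γ - 1) * (1 - s) ^ n) volume 0 1 := by
  apply (intervalIntegrable_rpow' (by linarith)).mul_continuousOn
  exact ((continuous_const.sub continuous_id).pow n).continuousOn

private lemma beta_le_aux (γ : ℝ) (hγ : 0 < γ) (n : ℕ) :
    ∫ s in (0:ℝ)..1, s ^ (γ - 1) * (1 - s) ^ n ≤ 1 / γ := by
  have h1 : ∫ s in (0:ℝ)..1, s ^ (γ - 1) = 1 / γ := by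
    rw [integral_rpow (Or.inl (by linarith)), sub_add_cancel]
    rw [Real.one_rpow, Real.zero_rpow hγ.ne']
    ring
  rw [← h1]
  apply intervalIntegral.integral_mono_on (by norm_num) (beta_intable_aux γ hγ n)
    (intervalIntegrable_rpow' (by linarith))
  intro s hs
  have h2 : (1 - s) ^ n ≤ 1 := pow_le_one₀ (by linarith [hs.2]) (by linarith [hs.1])
  calc s ^ (γ - 1) * (1 - s) ^ n ≤ s ^ (γ - 1) * 1 :=
        mul_le_mul_of_nonneg_left h2 (Real.rpow_nonneg hs.1 _)
    _ = s ^ (γ - 1) := mul_one _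

private lemma coeff_eq_aux (γ : ℝ) (hγ : 0 < γ) (n : ℕ) :
    Real.Gamma (γ + 1) * (n.factorial : ℝ) / Real.Gamma ((n : ℝ) + γ + 1)
      = γ * ∫ s in (0:ℝ)..1, s ^ (γ - 1) * (1 - s) ^ n := by
  rw [beta_eval_aux γ hγ n, gamma_prod_aux γ hγ n, Real.Gamma_add_one hγ.ne']
  have hP : (0:ℝ) < ∏ j ∈ Finset.range (n + 1), (γ + (j : ℝ)) :=
    Finset.prod_pos fun j _ => by positivity
  have hG : 0 < Real.Gamma γ := Real.Gamma_pos_of_pos hγ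
  field_simp

private lemma exp_tsum_aux (y : ℝ) : (∑' n : ℕ, y ^ n / (n.factorial : ℝ)) = Real.exp y := by
  rw [Real.exp_eq_exp_ℝ, NormedSpace.exp_eq_tsum_div]

private lemma key_aux (γ : ℝ) (hγ : 0 < γ) (x : ℝ) (hx : 0 < x) :
    Real.exp (-x) * x ^ γ * (∑' n : ℕ, x ^ n / (n.factorial : ℝ) *
        (Real.Gamma (γ + 1) * (n.factorial : ℝ) / Real.Gamma ((n : ℝ) + γ + 1)))
      = γ * ∫ t in (0:ℝ)..x, Real.exp (-t) * t ^ (γ - 1) := by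
  set F : ℕ → ℝ → ℝ := fun n s => x ^ n / (n.factorial : ℝ) * (γ * (s ^ (γ - 1) * (1 - s) ^ n))
    with hF
  set μ : Measure ℝ := volume.restrict (Set.Ioc (0:ℝ) 1) with hμ
  have hFint : ∀ n, Integrable (F n) μ := by
    intro n
    exact ((beta_intable_aux γ hγ n).1.const_mul γ).const_mul _
  have hFval : ∀ n, ∫ s, F n s ∂μ
      = x ^ n / (n.factorial : ℝ) * (γ * ∫ s in (0:ℝ)..1, s ^ (γ - 1) * (1 - s) ^ n) := by
    intro n
    rw [intervalIntegral.integral_of_le (by norm_num : (0:ℝ) ≤ 1), hμ]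
    simp only [hF]
    rw [MeasureTheory.integral_const_mul, MeasureTheory.integral_const_mul]
  have hFnorm : ∀ n, (∫ s, ‖F n s‖ ∂μ) = ∫ s, F n s ∂μ := by
    intro n
    rw [hμ]
    apply MeasureTheory.setIntegral_congr_fun measurableSet_Ioc
    intro s hs
    have : 0 ≤ F n s := by
      apply mul_nonneg (by positivity)
      apply mul_nonneg hγ.le
      exact mul_nonneg (Real.rpow_nonneg hs.1.le _) (pow_nonneg (by linarith [hs.2]) _)
    simp [Real.norm_of_nonneg this]
  have hsum : Summable fun n => ∫ s, ‖F n s‖ ∂μ := by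
    apply Summable.of_nonneg_of_le
      (fun n => MeasureTheory.integral_nonneg fun s => norm_nonneg _)
      (fun n => ?_) (Real.summable_pow_div_factorial x)
    rw [hFnorm n, hFval n]
    have hb := beta_le_aux γ hγ n
    have h1 : γ * ∫ s in (0:ℝ)..1, s ^ (γ - 1) * (1 - s) ^ n ≤ 1 := by
      calc γ * ∫ s in (0:ℝ)..1, s ^ (γ - 1) * (1 - s) ^ n ≤ γ * (1 / γ) :=
            mul_le_mul_of_nonneg_left hb hγ.le
        _ = 1 := by field_simp
    have h0 : (0:ℝ) ≤ x ^ n / (n.factorial : ℝ) := by positivity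
    calc x ^ n / (n.factorial : ℝ) * (γ * ∫ s in (0:ℝ)..1, s ^ (γ - 1) * (1 - s) ^ n)
        ≤ x ^ n / (n.factorial : ℝ) * 1 := mul_le_mul_of_nonneg_left h1 h0
      _ = x ^ n / (n.factorial : ℝ) := mul_one _
  have hswap := MeasureTheory.integral_tsum_of_summable_integral_norm hFint hsum
  have htsum_eq : (∑' n : ℕ, x ^ n / (n.factorial : ℝ) *
        (Real.Gamma (γ + 1) * (n.factorial : ℝ) / Real.Gamma ((n : ℝ) + γ + 1)))
      = ∫ s, (∑' n, F n s) ∂μ := by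
    rw [← hswap]
    apply tsum_congr
    intro n
    rw [coeff_eq_aux γ hγ n, hFval n]
  have hinner : ∀ s : ℝ, (∑' n, F n s)
      = γ * s ^ (γ - 1) * Real.exp (x * (1 - s)) := by
    intro s
    have h1 : ∀ n : ℕ, F n s = γ * s ^ (γ - 1) * ((x * (1 - s)) ^ n / (n.factorial : ℝ)) := by
      intro n; rw [hF]; simp only [mul_pow]; ring
    simp_rw [h1]
    rw [tsum_mul_left, exp_tsum_aux]
  have hint2 : (∫ s, (∑' n, F n s) ∂μ)
      = ∫ s in (0:ℝ)..1, γ * s ^ (γ - 1) * Real.exp (x * (1 - s)) := by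
    rw [intervalIntegral.integral_of_le (by norm_num : (0:ℝ) ≤ 1), hμ]
    exact MeasureTheory.integral_congr_ae (Filter.Eventually.of_forall fun s => hinner s)
  -- substitution
  have hsub : (∫ s in (0:ℝ)..1, Real.exp (-(x * s)) * (x * s) ^ (γ - 1))
      = x⁻¹ * ∫ t in (0:ℝ)..x, Real.exp (-t) * t ^ (γ - 1) := by
    have := intervalIntegral.integral_comp_mul_left
      (a := (0:ℝ)) (b := 1) (fun t => Real.exp (-t) * t ^ (γ - 1)) hx.ne'
    simpa [smul_eq_mul] using this
  have hcongr : (∫ s in (0:ℝ)..1, γ * s ^ (γ - 1) * Real.exp (x * (1 - s)))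
      = (γ * Real.exp x * x ^ (1 - γ)) *
        ∫ s in (0:ℝ)..1, Real.exp (-(x * s)) * (x * s) ^ (γ - 1) := by
    rw [← intervalIntegral.integral_const_mul]
    apply intervalIntegral.integral_congr
    intro s hs
    dsimp only
    rw [Set.uIcc_of_le (by norm_num : (0:ℝ) ≤ 1)] at hs
    have hs0 : (0:ℝ) ≤ s := hs.1
    have hxs : (x * s) ^ (γ - 1) = x ^ (γ - 1) * s ^ (γ - 1) := Real.mul_rpow hx.le hs0
    have hx1 : x ^ (1 - γ) * x ^ (γ - 1) = 1 := by
      rw [← Real.rpow_add hx]; norm_num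
    have hexp : Real.exp (x * (1 - s)) = Real.exp x * Real.exp (-(x * s)) := by
      rw [← Real.exp_add]; ring_nf
    rw [hexp, hxs]
    calc γ * s ^ (γ - 1) * (Real.exp x * Real.exp (-(x * s)))
        = (x ^ (1 - γ) * x ^ (γ - 1)) * (γ * s ^ (γ - 1) * (Real.exp x * Real.exp (-(x * s)))) :=
          by rw [hx1, one_mul]
      _ = γ * Real.exp x * x ^ (1 - γ) * (Real.exp (-(x * s)) * (x ^ (γ - 1) * s ^ (γ - 1))) :=
          by ring
  rw [htsum_eq, hint2, hcongr, hsub]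
  have hxg : x ^ γ * x ^ (1 - γ) = x := by
    rw [← Real.rpow_add hx]; norm_num
  have hxe : Real.exp (-x) * Real.exp x = 1 := by
    rw [← Real.exp_add]; simp
  calc Real.exp (-x) * x ^ γ * (γ * Real.exp x * x ^ (1 - γ) *
        (x⁻¹ * ∫ t in (0:ℝ)..x, Real.exp (-t) * t ^ (γ - 1)))
      = (Real.exp (-x) * Real.exp x) * ((x ^ γ * x ^ (1 - γ)) * x⁻¹) *
        (γ * ∫ t in (0:ℝ)..x, Real.exp (-t) * t ^ (γ - 1)) := by ring
    _ = γ * ∫ t in (0:ℝ)..x, Real.exp (-t) * t ^ (γ - 1) := by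
        rw [hxe, hxg, mul_inv_cancel₀ hx.ne']; ring

/-- For `γ > 0` and `φ_γ(x) = Σ_n x^n/n! · binom(n+γ,n)⁻¹`, one has
`e^{-x} x^γ φ_γ(x) → γ·Γ(γ)` as `x → ∞`. -/
theorem stmt1 (γ : ℝ) (hγ : 0 < γ) :
    Filter.Tendsto (fun x : ℝ => Real.exp (-x) * x ^ γ *
      ∑' n : ℕ, x ^ n / (n.factorial : ℝ) *
        (Real.Gamma (γ + 1) * (n.factorial : ℝ) / Real.Gamma ((n : ℝ) + γ + 1)))
      Filter.atTop (nhds (γ * Real.Gamma γ)) := by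
  have hlim : Filter.Tendsto (fun x : ℝ => γ * ∫ t in (0:ℝ)..x, Real.exp (-t) * t ^ (γ - 1))
      Filter.atTop (nhds (γ * Real.Gamma γ)) := by
    have h := MeasureTheory.intervalIntegral_tendsto_integral_Ioi 0
      (Real.GammaIntegral_convergent hγ) tendsto_id
    rw [← Real.Gamma_eq_integral hγ] at h
    exact h.const_mul γ
  apply hlim.congr'
  filter_upwards [Filter.eventually_gt_atTop (0:ℝ)] with x hx
  exact (key_aux γ hγ x hx).symm
end

section
/- Let G = (V, E) be a connected countable graph with degree bounded by μ, with combinatorial Laplacian Δ = C − A on ℓ²(V) (C the diagonal degree operator, A the adjacency operator), and probabilistic Laplacian Δ_c = I − P where P = C^{-1}A. Let τ be a finite trace on a C*-algebra of operators on ℓ²(V) containing Δ. Then for all t ≥ 0: τ((1 + μtΔ_c)^{-1}) ≤ τ((1 + tΔ)^{-1}) ≤ τ((1 + tΔ_c)^{-1}), where Δ_c is identified with a (non-self-adjoint on ℓ²(V), but similar to self-adjoint) operator in the algebra via τ(Δ_c^n) = τ(Q^n) with Q = C^{-1/2}ΔC^{-1/2}. -/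
/-!
With `R = C^{-1/2}` and `Q = RΔR ≥ 0`, conjugation by `R` carries `Q` to `Δ_c = C⁻¹Δ` and `Δ` to
`QC = √Q (√Q C)`. A trace is invariant under conjugation and satisfies
`τ((1 + ab)⁻¹) = τ((1 + ba)⁻¹)`, so the three resolvent traces are those of `μQ`, `√Q C √Q` and `Q`.
Conjugating `1 ≤ C ≤ μ` by `√Q` gives `Q ≤ √Q C √Q ≤ μQ`, and the inequalities follow from the
operator antitonicity of `x ↦ (1 + x)⁻¹` on positive elements and the positivity of `τ`.
-/

open Ring CFC
open scoped ComplexOrder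

section Jacobson

variable {A : Type*} [Ring A]

lemma one_add_mul_mul_one_sub_mul_mul_eq_one {a b c : A} (h : (1 + b * a) * c = 1) :
    (1 + a * b) * (1 - a * c * b) = 1 := by
  calc (1 + a * b) * (1 - a * c * b) = 1 + a * b - a * ((1 + b * a) * c) * b := by noncomm_ring
    _ = 1 := by rw [h]; noncomm_ring

lemma one_sub_mul_mul_mul_one_add_mul_eq_one {a b c : A} (h : c * (1 + b * a) = 1) :
    (1 - a * c * b) * (1 + a * b) = 1 := by
  calc (1 - a * c * b) * (1 + a * b) = 1 + a * b - a * (c * (1 + b * a)) * b := by noncomm_ring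
    _ = 1 := by rw [h]; noncomm_ring

lemma Ring.inverse_one_add_mul {a b : A} (h : IsUnit (1 + b * a)) :
    (1 + a * b)⁻¹ʳ = 1 - a * (1 + b * a)⁻¹ʳ * b := by
  obtain ⟨u, hu⟩ := h
  rw [← hu, inverse_unit]
  let v : Aˣ := ⟨1 + a * b, 1 - a * ↑u⁻¹ * b,
    one_add_mul_mul_one_sub_mul_mul_eq_one (by rw [← hu, Units.mul_inv]),
    one_sub_mul_mul_mul_one_add_mul_eq_one (by rw [← hu, Units.inv_mul])⟩
  exact inverse_unit v

lemma isUnit_one_add_mul_comm {a b : A} : IsUnit (1 + a * b) ↔ IsUnit (1 + b * a) := by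
  suffices key : ∀ a b : A, IsUnit (1 + b * a) → IsUnit (1 + a * b) from ⟨key b a, key a b⟩
  intro a b h
  exact isUnit_iff_exists.mpr ⟨_, one_add_mul_mul_one_sub_mul_mul_eq_one (mul_inverse_cancel _ h),
    one_sub_mul_mul_mul_one_add_mul_eq_one (inverse_mul_cancel _ h)⟩

end Jacobson

section Trace

variable {A M F : Type*} [Ring A] [FunLike F A M] {τ : F}

lemma trace_ringInverse_units_conj (hτ : ∀ a b, τ (a * b) = τ (b * a)) (u : Aˣ) (x : A) :
    τ (↑u * x * ↑u⁻¹)⁻¹ʳ = τ x⁻¹ʳ := by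
  rw [inverse_mul (.inr (Units.isUnit _)), inverse_mul (.inl (Units.isUnit _)), inverse_unit,
    inverse_unit, inv_inv, hτ, mul_assoc, Units.inv_mul, mul_one]

lemma trace_ringInverse_one_add_mul_comm [AddCommGroup M] [AddMonoidHomClass F A M]
    (hτ : ∀ a b, τ (a * b) = τ (b * a)) (a b : A) :
    τ (1 + a * b)⁻¹ʳ = τ (1 + b * a)⁻¹ʳ := by
  by_cases h : IsUnit (1 + b * a)
  · have hab : τ (a * (1 + b * a)⁻¹ʳ * b) = τ 1 - τ (1 + b * a)⁻¹ʳ := by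
      calc τ (a * (1 + b * a)⁻¹ʳ * b) = τ ((1 + b * a) * (1 + b * a)⁻¹ʳ - (1 + b * a)⁻¹ʳ) := by
            rw [hτ]; congr 1; noncomm_ring
        _ = τ 1 - τ (1 + b * a)⁻¹ʳ := by rw [mul_inverse_cancel _ h, map_sub]
    rw [inverse_one_add_mul h, map_sub, hab, sub_sub_cancel]
  · rw [inverse_non_unit _ h, inverse_non_unit _ (mt isUnit_one_add_mul_comm.mp h)]

end Trace

lemma Units.exists_val_eq_and_val_inv_eq {M : Type*} [Monoid M] {r c : M}
    (h₁ : r * r * c = 1) (h₂ : c * r * r = 1) : ∃ u : Mˣ, ↑u = r ∧ ↑u⁻¹ = r * c := by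
  have hcomm : c * r = r * c :=
    calc c * r = c * r * (r * r * c) := by rw [h₁, mul_one]
      _ = c * r * r * (r * c) := by simp only [mul_assoc]
      _ = r * c := by rw [h₂, one_mul]
  refine ⟨⟨r, r * c, by rw [← mul_assoc, h₁], ?_⟩, rfl, rfl⟩
  rw [mul_assoc, hcomm, ← mul_assoc, h₁]

lemma Units.conj_one_add_smul {R A : Type*} [CommSemiring R] [Ring A] [Algebra R A]
    (u : Aˣ) (z : R) (x : A) : ↑u * (1 + z • x) * ↑u⁻¹ = 1 + z • (↑u * x * ↑u⁻¹) := by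
  rw [mul_add, add_mul, mul_one, Units.mul_inv, mul_smul_comm, smul_mul_assoc]

section CStarAlgebra

variable {A : Type*} [CStarAlgebra A] [PartialOrder A] [StarOrderedRing A]

lemma re_trace_ringInverse_one_add_le {F : Type*} [FunLike F A ℂ] [AddMonoidHomClass F A ℂ]
    {τ : F} (hτ : ∀ a, 0 ≤ a → 0 ≤ (τ a).re) {X Y : A} (hX : 0 ≤ X) (hXY : X ≤ Y) :
    (τ (1 + Y)⁻¹ʳ).re ≤ (τ (1 + X)⁻¹ʳ).re := by
  have h := hτ _ <| sub_nonneg.mpr <| CStarAlgebra.ringInverse_le_ringInverse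
    (add_le_add_right hXY 1) (isStrictlyPositive_one.add_nonneg hX)
  rwa [map_sub, Complex.sub_re, sub_nonneg] at h

lemma le_sqrt_mul_mul_sqrt {a b : A} (ha : 0 ≤ a) (hb : 1 ≤ b) : a ≤ sqrt a * b * sqrt a := by
  simpa [sqrt_mul_sqrt_self a ha] using conjugate_le_conjugate_of_nonneg hb (sqrt_nonneg a)

lemma sqrt_mul_mul_sqrt_le_smul {a b : A} {μ : ℝ} (ha : 0 ≤ a) (hb : b ≤ μ • 1) :
    sqrt a * b * sqrt a ≤ μ • a := by
  simpa [sqrt_mul_sqrt_self a ha] using conjugate_le_conjugate_of_nonneg hb (sqrt_nonneg a)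

end CStarAlgebra

theorem stmt9_general {A : Type*} [NormedRing A] [StarRing A] [CStarRing A] [CompleteSpace A]
    [NormedAlgebra ℂ A] [StarModule ℂ A] [PartialOrder A] [StarOrderedRing A]
    (τ : A →ₗ[ℂ] ℂ)
    (hτpos : ∀ a : A, 0 ≤ a → 0 ≤ (τ a).re ∧ (τ a).im = 0)
    (hτtr : ∀ a b : A, τ (a * b) = τ (b * a))
    (μ : ℝ)
    (C Adj Δ P Δc R : A)
    (hC1 : 1 ≤ C) (hCμ : C ≤ μ • (1 : A))
    (hΔ : Δ = C - Adj) (hΔpos : 0 ≤ Δ)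
    (hP : Adj = C * P) (hΔc : Δc = 1 - P)
    -- `R = C^{-1/2}`:
    (hR : 0 ≤ R) (hRC : R * R * C = 1) (hCR : C * R * R = 1) :
    ∀ t : ℝ, 0 ≤ t →
      (τ (Ring.inverse (1 + ((μ * t : ℝ) : ℂ) • Δc))).re ≤
        (τ (Ring.inverse (1 + (t : ℂ) • Δ))).re ∧
      (τ (Ring.inverse (1 + (t : ℂ) • Δ))).re ≤
        (τ (Ring.inverse (1 + (t : ℂ) • Δc))).re := by
  let _ : CStarAlgebra A := {}
  intro t ht
  obtain ⟨u, rfl, hu⟩ := Units.exists_val_eq_and_val_inv_eq hRC hCR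
  set Q := ↑u * Δ * ↑u
  have hQ : 0 ≤ Q := conjugate_nonneg_of_nonneg hΔpos hR
  have hΔc_conj : ↑u * Q * ↑u⁻¹ = Δc := by
    calc ↑u * Q * ↑u⁻¹ = ↑u * ↑u * Δ * (↑u * ↑u * C) := by rw [hu]; simp only [Q]; noncomm_ring
      _ = Δc := by rw [hRC, mul_one, hΔc, hΔ, hP, mul_sub, ← mul_assoc, hRC, one_mul]
  have hΔ_conj : ↑u * Δ * ↑u⁻¹ = sqrt Q * (sqrt Q * C) := by
    rw [hu, ← mul_assoc, ← mul_assoc, sqrt_mul_sqrt_self Q hQ]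
  have hΔc_trace (z : ℂ) : τ (1 + z • Δc)⁻¹ʳ = τ (1 + z • Q)⁻¹ʳ := by
    rw [← hΔc_conj, ← Units.conj_one_add_smul, trace_ringInverse_units_conj hτtr]
  have hΔ_trace : τ (1 + (t : ℂ) • Δ)⁻¹ʳ = τ (1 + (t : ℂ) • (sqrt Q * C * sqrt Q))⁻¹ʳ := by
    rw [← trace_ringInverse_units_conj hτtr u, Units.conj_one_add_smul, hΔ_conj, ← mul_smul_comm,
      trace_ringInverse_one_add_mul_comm hτtr, smul_mul_assoc]
  have hmono {X Y : A} (hX : 0 ≤ X) (hXY : X ≤ Y) :=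
    re_trace_ringInverse_one_add_le (τ := τ) (fun a ha ↦ (hτpos a ha).1) hX hXY
  have ht' : (0 : ℂ) ≤ t := Complex.zero_le_real.mpr ht
  have hlower : (t : ℂ) • Q ≤ (t : ℂ) • (sqrt Q * C * sqrt Q) :=
    smul_le_smul_of_nonneg_left (le_sqrt_mul_mul_sqrt hQ hC1) ht'
  have hupper : (t : ℂ) • (sqrt Q * C * sqrt Q) ≤ ((μ * t : ℝ) : ℂ) • Q :=
    calc (t : ℂ) • (sqrt Q * C * sqrt Q) ≤ (t : ℂ) • (μ • Q) :=
          smul_le_smul_of_nonneg_left (sqrt_mul_mul_sqrt_le_smul hQ hCμ) ht'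
      _ = ((μ * t : ℝ) : ℂ) • Q := by
          rw [← Complex.coe_smul, smul_smul, ← Complex.ofReal_mul, mul_comm t μ]
  have hCQ : 0 ≤ sqrt Q * C * sqrt Q :=
    conjugate_nonneg_of_nonneg (zero_le_one.trans hC1) (sqrt_nonneg Q)
  rw [hΔc_trace, hΔc_trace, hΔ_trace]
  exact ⟨hmono (smul_nonneg ht' hCQ) hupper, hmono (smul_nonneg ht' hQ) hlower⟩

/-- Trace comparison between the combinatorial Laplacian `Δ = C - A` and the probabilistic
Laplacian `Δ_c = 1 - P` (with `A = C P`, `1 ≤ C ≤ μ·1`) of a bounded-degree graph: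
for a finite trace `τ` on a C*-algebra of operators containing `Δ`, and identifying
`Δ_c` via `τ(Δ_c^n) = τ(Q^n)` with `Q = C^{-1/2} Δ C^{-1/2}`, one has
`τ((1+μtΔ_c)⁻¹) ≤ τ((1+tΔ)⁻¹) ≤ τ((1+tΔ_c)⁻¹)` for all `t ≥ 0`. -/
theorem stmt9 {A : Type*} [NormedRing A] [StarRing A] [CStarRing A] [CompleteSpace A]
    [NormedAlgebra ℂ A] [StarModule ℂ A] [PartialOrder A] [StarOrderedRing A]
    (τ : A →ₗ[ℂ] ℂ)
    (hτpos : ∀ a : A, 0 ≤ a → 0 ≤ (τ a).re ∧ (τ a).im = 0)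
    (hτtr : ∀ a b : A, τ (a * b) = τ (b * a))
    (hτbdd : ∃ Cτ : ℝ, ∀ a : A, ‖τ a‖ ≤ Cτ * ‖a‖)
    (μ : ℝ) (hμ : 1 ≤ μ)
    (C Adj Δ P Δc R : A)
    (hC1 : 1 ≤ C) (hCμ : C ≤ μ • (1 : A))
    (hΔ : Δ = C - Adj) (hΔpos : 0 ≤ Δ)
    (hP : Adj = C * P) (hΔc : Δc = 1 - P)
    -- `R = C^{-1/2}`:
    (hR : 0 ≤ R) (hRC : R * R * C = 1) (hCR : C * R * R = 1)
    -- identification of `Δ_c` with `Q = C^{-1/2} Δ C^{-1/2}` at the level of the trace: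
    (htr : ∀ n : ℕ, τ (Δc ^ n) = τ ((R * Δ * R) ^ n)) :
    ∀ t : ℝ, 0 ≤ t →
      (τ (Ring.inverse (1 + ((μ * t : ℝ) : ℂ) • Δc))).re ≤
        (τ (Ring.inverse (1 + (t : ℂ) • Δ))).re ∧
      (τ (Ring.inverse (1 + (t : ℂ) • Δ))).re ≤
        (τ (Ring.inverse (1 + (t : ℂ) • Δc))).re :=
  stmt9_general τ hτpos hτtr μ C Adj Δ P Δc R hC1 hCμ hΔ hΔpos hP hΔc hR hRC hCR
end

section
/- Let τ be a finite trace on a C*-algebra 𝒜 of operators containing a positive contraction-related operator P (the transition operator) with ‖P‖ ≤ 1 in the appropriate sense, and let γ > 0. Suppose there exist constants c₁, c₂ > 0 with c₁ n^{-γ} ≤ τ(P^n + P^{n+1}) and τ(P^n) ≤ c₂ n^{-γ} for all n ≥ 1. Then the function θ_c(t) := e^{-t}·Σ_{n=0}^∞ (t^n/n!)·τ(P^n) = τ(e^{-t(I−P)}) satisfies k^{-1} t^{-γ} ≤ θ_c(t) ≤ k t^{-γ} for some k > 1 and all sufficiently large t. -/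
set_option maxHeartbeats 1000000

open Filter

private lemma myExpSum (t : ℝ) : ∑' n : ℕ, t ^ n / (n.factorial : ℝ) = Real.exp t := by
  have h := congrFun (NormedSpace.exp_eq_tsum_div (𝔸 := ℝ)) t
  rw [Real.exp_eq_exp_ℝ, h]

private lemma myTailLe (t : ℝ) (ht : 0 ≤ t) (N : ℕ) :
    ∑' n : ℕ, t ^ (n + N) / ((n + N).factorial : ℝ) ≤ Real.exp t := by
  have hs : Summable (fun n : ℕ => t ^ n / (n.factorial : ℝ)) :=
    Real.summable_pow_div_factorial t
  have h := Summable.sum_add_tsum_nat_add (f := fun n : ℕ => t ^ n / (n.factorial : ℝ)) N hs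
  have h5 : (0:ℝ) ≤ ∑ i ∈ Finset.range N, t ^ i / (i.factorial : ℝ) :=
    Finset.sum_nonneg fun i _ => by positivity
  rw [myExpSum] at h
  linarith

private lemma myTailLe2 (t : ℝ) (ht : 0 ≤ t) (N : ℕ) :
    ∑' n : ℕ, t ^ (n + N) / ((n + N).factorial : ℝ) ≤ (1/2 : ℝ) ^ N * Real.exp (2 * t) := by
  have hs2 : Summable (fun n : ℕ => (2*t) ^ (n + N) / ((n + N).factorial : ℝ)) :=
    (summable_nat_add_iff N).2 (Real.summable_pow_div_factorial (2*t))
  have hs1 : Summable (fun n : ℕ => t ^ (n + N) / ((n + N).factorial : ℝ)) :=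
    (summable_nat_add_iff N).2 (Real.summable_pow_div_factorial t)
  have key : ∀ n : ℕ, t ^ (n + N) / ((n + N).factorial : ℝ)
      ≤ (1/2 : ℝ) ^ N * ((2*t) ^ (n + N) / ((n + N).factorial : ℝ)) := by
    intro n
    have hfac : (0:ℝ) < ((n + N).factorial : ℝ) := by positivity
    have h1 : (1:ℝ) ≤ (2:ℝ) ^ n := one_le_pow₀ one_le_two
    have h2 : (0:ℝ) ≤ t ^ (n + N) := pow_nonneg ht _
    have hnum : t ^ (n + N) ≤ (1/2 : ℝ) ^ N * (2*t) ^ (n + N) := by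
      rw [mul_pow]
      calc t ^ (n + N) = 1 * t ^ (n + N) := (one_mul _).symm
        _ ≤ (2:ℝ)^n * t ^ (n + N) := mul_le_mul_of_nonneg_right h1 h2
        _ = (1/2 : ℝ) ^ N * ((2:ℝ) ^ (n+N) * t ^ (n + N)) := by
            rw [pow_add (2:ℝ) n N]
            have h2N : (1/2:ℝ)^N * 2^N = 1 := by rw [← mul_pow]; norm_num
            linear_combination (-(2:ℝ)^n * t^(n+N)) * h2N
    rw [← mul_div_assoc]
    gcongr
  calc ∑' n : ℕ, t ^ (n + N) / ((n + N).factorial : ℝ)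
      ≤ ∑' n : ℕ, (1/2 : ℝ) ^ N * ((2*t) ^ (n + N) / ((n + N).factorial : ℝ)) :=
        Summable.tsum_le_tsum key hs1 (hs2.mul_left _)
    _ = (1/2 : ℝ) ^ N * ∑' n : ℕ, (2*t) ^ (n + N) / ((n + N).factorial : ℝ) := tsum_mul_left
    _ ≤ (1/2 : ℝ) ^ N * Real.exp (2 * t) := by
        have := myTailLe (2*t) (by linarith) N
        gcongr

private lemma myHeadLe (t : ℝ) (ht : 0 ≤ t) (M : ℕ) :
    ∑ n ∈ Finset.range M, t ^ n / (n.factorial : ℝ) ≤ 2 ^ M * Real.exp (t / 2) := by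
  have h1 : ∀ n ∈ Finset.range M, t ^ n / (n.factorial : ℝ)
      ≤ (2:ℝ) ^ M * ((t/2) ^ n / (n.factorial : ℝ)) := by
    intro n hn
    have hn' : n ≤ M := le_of_lt (Finset.mem_range.1 hn)
    have hfac : (0:ℝ) < (n.factorial : ℝ) := by positivity
    have h2 : (2:ℝ)^n ≤ 2^M := pow_le_pow_right₀ one_le_two hn'
    have hnum : t ^ n ≤ (2:ℝ) ^ M * (t/2) ^ n := by
      rw [div_pow, mul_div_assoc', le_div_iff₀ (by positivity)]
      calc t ^ n * 2 ^ n ≤ t ^ n * 2 ^ M := by gcongr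
        _ = 2 ^ M * t ^ n := mul_comm _ _
    rw [← mul_div_assoc]
    gcongr
  calc ∑ n ∈ Finset.range M, t ^ n / (n.factorial : ℝ)
      ≤ ∑ n ∈ Finset.range M, (2:ℝ) ^ M * ((t/2) ^ n / (n.factorial : ℝ)) :=
        Finset.sum_le_sum h1
    _ = (2:ℝ) ^ M * ∑ n ∈ Finset.range M, (t/2) ^ n / (n.factorial : ℝ) := by
        rw [Finset.mul_sum]
    _ ≤ 2 ^ M * Real.exp (t / 2) := by
        have hle : ∑ n ∈ Finset.range M, (t/2) ^ n / (n.factorial : ℝ)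
            ≤ Real.exp (t/2) := by
          have := Summable.sum_le_tsum (Finset.range M) (fun i _ => by positivity)
            (Real.summable_pow_div_factorial (t/2))
          rwa [myExpSum] at this
        gcongr

/-- If `τ` is a finite trace on a C*-algebra containing a positive contraction `P` with
`c₁ n^{-γ} ≤ τ(P^n + P^{n+1})` and `τ(P^n) ≤ c₂ n^{-γ}` for `n ≥ 1`, then
`θ_c(t) = e^{-t} Σ_n (t^n/n!) τ(P^n) = τ(e^{-t(1-P)})` satisfies
`k⁻¹ t^{-γ} ≤ θ_c(t) ≤ k t^{-γ}` for some `k > 1` and all large `t`. -/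
theorem stmt15 {A : Type*} [NormedRing A] [StarRing A] [CStarRing A] [CompleteSpace A]
    [NormedAlgebra ℂ A] [StarModule ℂ A] [PartialOrder A] [StarOrderedRing A]
    (τ : A →ₗ[ℂ] ℂ)
    (hτpos : ∀ a : A, 0 ≤ a → 0 ≤ (τ a).re ∧ (τ a).im = 0)
    (hτtr : ∀ a b : A, τ (a * b) = τ (b * a))
    (hτbdd : ∃ Cτ : ℝ, ∀ a : A, ‖τ a‖ ≤ Cτ * ‖a‖)
    (P : A) (hP : 0 ≤ P) (hPnorm : ‖P‖ ≤ 1)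
    (γ : ℝ) (hγ : 0 < γ) (c₁ c₂ : ℝ) (hc₁ : 0 < c₁) (hc₂ : 0 < c₂)
    (hlow : ∀ n : ℕ, 1 ≤ n → c₁ * (n : ℝ) ^ (-γ) ≤ (τ (P ^ n + P ^ (n + 1))).re)
    (hup : ∀ n : ℕ, 1 ≤ n → (τ (P ^ n)).re ≤ c₂ * (n : ℝ) ^ (-γ))
    (θ : ℝ → ℝ)
    (hθ : ∀ t : ℝ, θ t = Real.exp (-t) *
      ∑' n : ℕ, t ^ n / (n.factorial : ℝ) * (τ (P ^ n)).re) :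
    ∃ k : ℝ, 1 < k ∧ ∃ T : ℝ, ∀ t : ℝ, T ≤ t →
      k⁻¹ * t ^ (-γ) ≤ θ t ∧ θ t ≤ k * t ^ (-γ) := by
  classical
  letI : CStarAlgebra A := { ‹NormedRing A›, ‹StarRing A›, ‹CStarRing A›, ‹CompleteSpace A›,
    ‹NormedAlgebra ℂ A›, ‹StarModule ℂ A› with }
  clear hτbdd
  -- Basic algebraic facts
  have hPle1 : P ≤ 1 := (CStarAlgebra.norm_le_one_iff_of_nonneg P hP).mp hPnorm
  have hPpow : ∀ n : ℕ, 0 ≤ P ^ n := fun n => CStarAlgebra.pow_nonneg hP n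
  have hprod : ∀ x y : A, 0 ≤ x → 0 ≤ y → 0 ≤ (τ (x * y)).re := by
    intro x y hx hy
    have hs : CFC.sqrt x * CFC.sqrt x = x := CFC.sqrt_mul_sqrt_self x hx
    set s := CFC.sqrt x with hsdef
    have hsa : star s = s := (IsSelfAdjoint.of_nonneg (CFC.sqrt_nonneg x)).star_eq
    have h1 : τ (x * y) = τ (star s * y * s) := by
      conv_lhs => rw [← hs, mul_assoc]
      rw [hτtr s (s * y), hsa]
    rw [h1]
    exact (hτpos _ (star_left_conjugate_nonneg hy s)).1
  have hb0 : ∀ n : ℕ, 0 ≤ (τ (P ^ n)).re := fun n => (hτpos _ (hPpow n)).1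
  have hbmono : ∀ n : ℕ, (τ (P ^ (n+1))).re ≤ (τ (P ^ n)).re := by
    intro n
    have h1 : 0 ≤ (τ (P ^ n * (1 - P))).re :=
      hprod _ _ (hPpow n) (sub_nonneg.2 hPle1)
    have h2 : P ^ n * (1 - P) = P ^ n - P ^ (n+1) := by
      rw [mul_sub, mul_one, ← pow_succ]
    rw [h2, map_sub, Complex.sub_re] at h1
    linarith
  have hbB : ∀ n : ℕ, (τ (P ^ n)).re ≤ (τ (P ^ (0:ℕ))).re := by
    intro n
    induction n with
    | zero => exact le_rfl
    | succ n ih => exact (hbmono n).trans ih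
  set B := (τ (P ^ (0:ℕ))).re with hBdef
  have hBnn : 0 ≤ B := hb0 0
  have hlow' : ∀ n : ℕ, 1 ≤ n →
      c₁ * (n : ℝ) ^ (-γ) ≤ (τ (P ^ n)).re + (τ (P ^ (n+1))).re := by
    intro n hn
    have h := hlow n hn
    rwa [map_add, Complex.add_re] at h
  -- Eventual hypotheses
  have hδ : 0 < (1 - Real.log 2)/2 := by
    have := Real.log_two_lt_d9
    norm_num
    linarith
  have hE3 : ∀ᶠ t : ℝ in atTop,
      t ^ γ * Real.exp (-((1 - Real.log 2)/2) * t) ≤ 1/(4*(B+1)) := by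
    have h := tendsto_rpow_mul_exp_neg_mul_atTop_nhds_zero γ _ hδ
    exact h.eventually_le_const (by positivity)
  have hE2 : ∀ᶠ t : ℝ in atTop,
      1 + Real.exp ((2 - 2*Real.log 2) * t) ≤ Real.exp t / 2 := by
    have hlt : 2 - 2*Real.log 2 < 1 := by
      have := Real.log_two_gt_d9; linarith
    have h1 : Tendsto (fun t : ℝ => Real.exp ((2 - 2*Real.log 2 - 1) * t)) atTop (nhds 0) := by
      have ha : Tendsto (fun t : ℝ => (1 - (2 - 2*Real.log 2)) * t) atTop atTop :=
        Tendsto.const_mul_atTop (by linarith) tendsto_id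
      have h2 := Real.tendsto_exp_neg_atTop_nhds_zero.comp ha
      refine h2.congr fun t => ?_
      simp only [Function.comp_apply]
      ring_nf
    have h2 := Real.tendsto_exp_neg_atTop_nhds_zero
    filter_upwards [h1.eventually_le_const (show (0:ℝ) < 1/4 by norm_num),
      h2.eventually_le_const (show (0:ℝ) < 1/4 by norm_num)] with t ha hb
    have hexp : 0 < Real.exp t := Real.exp_pos t
    have e1 : Real.exp ((2-2*Real.log 2)*t)
        = Real.exp ((2-2*Real.log 2 - 1)*t) * Real.exp t := by
      rw [← Real.exp_add]; ring_nf
    have k1 : Real.exp ((2-2*Real.log 2)*t) ≤ Real.exp t/4 := by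
      rw [e1]
      nlinarith
    have k2 : (1:ℝ) ≤ Real.exp t/4 := by
      have e2 : Real.exp (-t) * Real.exp t = 1 := by
        rw [← Real.exp_add]; simp
      nlinarith
    linarith
  obtain ⟨T, hT⟩ := eventually_atTop.1
    ((eventually_ge_atTop (1:ℝ)).and (hE2.and hE3))
  -- constants
  have h2γpos : (0:ℝ) < (2:ℝ) ^ (-γ) := Real.rpow_pos_of_pos two_pos _
  have hclow : 0 < c₁ * (2:ℝ)^(-γ)/4 := by positivity
  set clow := c₁ * (2:ℝ)^(-γ)/4 with hclowdef
  set cup := 1 + c₂ * (2:ℝ)^γ with hcupdef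
  have hcup : 0 < cup := by
    have : (0:ℝ) < (2:ℝ) ^ γ := Real.rpow_pos_of_pos two_pos _
    positivity
  refine ⟨max (max clow⁻¹ cup) 2, lt_of_lt_of_le one_lt_two (le_max_right _ 2), T, fun t ht => ?_⟩
  obtain ⟨ht1, hE2t, hE3t⟩ := hT t ht
  have ht0 : (0:ℝ) < t := lt_of_lt_of_le one_pos ht1
  have htnn : (0:ℝ) ≤ t := ht0.le
  have htneg : (0:ℝ) ≤ t ^ (-γ) := Real.rpow_nonneg htnn _
  -- summability
  have hSg : Summable (fun n : ℕ => t ^ n / (n.factorial : ℝ) * (τ (P ^ n)).re) := by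
    refine Summable.of_nonneg_of_le
      (fun n => mul_nonneg (by positivity) (hb0 n)) (fun n => ?_)
      ((Real.summable_pow_div_factorial t).mul_right B)
    exact mul_le_mul_of_nonneg_left (hbB n) (by positivity)
  have hSg' : Summable (fun n : ℕ => t ^ n / (n.factorial : ℝ) * (τ (P ^ (n+1))).re) := by
    refine Summable.of_nonneg_of_le
      (fun n => mul_nonneg (by positivity) (hb0 (n+1))) (fun n => ?_)
      ((Real.summable_pow_div_factorial t).mul_right B)
    exact mul_le_mul_of_nonneg_left (hbB (n+1)) (by positivity)
  constructor
  · -- LOWER BOUND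
    set N := ⌊2*t⌋₊ with hNdef
    have hN1 : 1 ≤ N := Nat.le_floor (by push_cast; linarith)
    have hNt : (N:ℝ) ≤ 2*t := Nat.floor_le (by linarith)
    have hN2 : 2*t ≤ (N:ℝ) + 1 := (Nat.lt_floor_add_one (2*t)).le
    have hpair : ∀ n : ℕ, t ^ n / (n.factorial:ℝ) * ((τ (P ^ n)).re + (τ (P ^ (n+1))).re)
        ≤ 2 * (t ^ n / (n.factorial:ℝ) * (τ (P ^ n)).re) := by
      intro n
      have h := hbmono n
      have hpos : (0:ℝ) ≤ t ^ n / (n.factorial:ℝ) := by positivity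
      nlinarith [mul_nonneg hpos (sub_nonneg.2 h)]
    have hSpair : Summable (fun n : ℕ =>
        t ^ n / (n.factorial:ℝ) * ((τ (P ^ n)).re + (τ (P ^ (n+1))).re)) := by
      refine (hSg.add hSg').congr fun n => ?_
      ring
    have hlb1 : ∑' n : ℕ, t ^ n / (n.factorial:ℝ) * ((τ (P ^ n)).re + (τ (P ^ (n+1))).re)
        ≤ 2 * ∑' n : ℕ, t ^ n / (n.factorial:ℝ) * (τ (P ^ n)).re := by
      rw [← tsum_mul_left]
      exact Summable.tsum_le_tsum hpair hSpair (hSg.mul_left 2)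
    have hlb2 : ∑ n ∈ Finset.Icc 1 N, (c₁ * (2*t) ^ (-γ)) * (t ^ n / (n.factorial:ℝ))
        ≤ ∑' n : ℕ, t ^ n / (n.factorial:ℝ) * ((τ (P ^ n)).re + (τ (P ^ (n+1))).re) := by
      refine le_trans (Finset.sum_le_sum ?_)
        (Summable.sum_le_tsum _ (fun n _ => mul_nonneg (by positivity)
          (add_nonneg (hb0 n) (hb0 (n+1)))) hSpair)
      intro n hn
      obtain ⟨hn1, hnN⟩ := Finset.mem_Icc.1 hn
      have hnpos : (0:ℝ) < (n:ℝ) := by exact_mod_cast hn1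
      have hn2t : (n:ℝ) ≤ 2*t := le_trans (by exact_mod_cast hnN) hNt
      have hnr : (2*t) ^ (-γ) ≤ (n:ℝ) ^ (-γ) :=
        Real.rpow_le_rpow_of_nonpos hnpos hn2t (by linarith)
      have hc : c₁ * (2*t) ^ (-γ) ≤ (τ (P ^ n)).re + (τ (P ^ (n+1))).re :=
        le_trans (mul_le_mul_of_nonneg_left hnr hc₁.le) (hlow' n hn1)
      calc (c₁ * (2*t) ^ (-γ)) * (t ^ n / (n.factorial:ℝ))
          = (t ^ n / (n.factorial:ℝ)) * (c₁ * (2*t) ^ (-γ)) := mul_comm _ _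
        _ ≤ (t ^ n / (n.factorial:ℝ)) * ((τ (P ^ n)).re + (τ (P ^ (n+1))).re) :=
            mul_le_mul_of_nonneg_left hc (by positivity)
    have hsplit : (∑ n ∈ Finset.range (N+1), t ^ n / (n.factorial:ℝ))
        = 1 + ∑ n ∈ Finset.Icc 1 N, t ^ n / (n.factorial:ℝ) := by
      rw [Finset.range_eq_Ico,
        ← Finset.sum_Ico_consecutive _ (Nat.zero_le 1) (by omega : 1 ≤ N+1),
        Finset.Ico_add_one_right_eq_Icc]
      congr 1
      simp
    have hrange : ∑ n ∈ Finset.range (N+1), t ^ n / (n.factorial:ℝ)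
        = Real.exp t - ∑' n : ℕ, t ^ (n + (N+1)) / ((n + (N+1)).factorial : ℝ) := by
      have h := Summable.sum_add_tsum_nat_add (f := fun n : ℕ => t ^ n / (n.factorial : ℝ)) (N+1)
        (Real.summable_pow_div_factorial t)
      rw [myExpSum] at h
      linarith
    have htail : ∑' n : ℕ, t ^ (n + (N+1)) / ((n + (N+1)).factorial : ℝ)
        ≤ Real.exp ((2 - 2*Real.log 2) * t) := by
      refine le_trans (myTailLe2 t htnn (N+1)) ?_
      have h12 : ((1:ℝ)/2) ^ (N+1) = Real.exp ((N+1 : ℕ) * Real.log (1/2)) := by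
        rw [Real.exp_nat_mul, Real.exp_log (by norm_num : (0:ℝ) < 1/2)]
      rw [h12, ← Real.exp_add]
      apply Real.exp_le_exp.2
      have hlog2 : (0:ℝ) < Real.log 2 := Real.log_pos one_lt_two
      have hlog12 : Real.log (1/2 : ℝ) = -Real.log 2 := by
        rw [one_div, Real.log_inv]
      rw [hlog12]
      push_cast
      nlinarith
    have hIcc_lb : Real.exp t/2 ≤ ∑ n ∈ Finset.Icc 1 N, t^n/(n.factorial:ℝ) := by
      have h1 : ∑ n ∈ Finset.Icc 1 N, t^n/(n.factorial:ℝ)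
          = Real.exp t - (∑' n : ℕ, t ^ (n + (N+1)) / ((n + (N+1)).factorial : ℝ)) - 1 := by
        rw [← hrange, hsplit]; ring
      rw [h1]
      linarith
    have hcx : (0:ℝ) ≤ c₁ * (2*t) ^ (-γ) :=
      mul_nonneg hc₁.le (Real.rpow_nonneg (by linarith) _)
    have hS_lb : c₁ * (2*t)^(-γ) * (Real.exp t/2)
        ≤ 2 * ∑' n : ℕ, t ^ n / (n.factorial:ℝ) * (τ (P ^ n)).re := by
      calc c₁ * (2*t)^(-γ) * (Real.exp t/2)
          ≤ c₁ * (2*t)^(-γ) * ∑ n ∈ Finset.Icc 1 N, t^n/(n.factorial:ℝ) :=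
            mul_le_mul_of_nonneg_left hIcc_lb hcx
        _ = ∑ n ∈ Finset.Icc 1 N, (c₁ * (2*t) ^ (-γ)) * (t ^ n / (n.factorial:ℝ)) :=
            Finset.mul_sum _ _ _
        _ ≤ ∑' n : ℕ, t ^ n / (n.factorial:ℝ) * ((τ (P ^ n)).re + (τ (P ^ (n+1))).re) := hlb2
        _ ≤ 2 * ∑' n : ℕ, t ^ n / (n.factorial:ℝ) * (τ (P ^ n)).re := hlb1
    have hlow_total : clow * t^(-γ) ≤ θ t := by
      rw [hθ t]
      have h2 : Real.exp (-t) * (c₁*(2*t)^(-γ)*(Real.exp t/2)/2)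
          ≤ Real.exp (-t) * ∑' n : ℕ, t ^ n / (n.factorial:ℝ) * (τ (P ^ n)).re := by
        apply mul_le_mul_of_nonneg_left ?_ (Real.exp_nonneg _)
        linarith
      refine le_trans (le_of_eq ?_) h2
      rw [hclowdef, Real.mul_rpow (by norm_num : (0:ℝ) ≤ 2) htnn, Real.exp_neg]
      field_simp
      ring
    calc (max (max clow⁻¹ cup) 2)⁻¹ * t ^ (-γ) ≤ clow * t ^ (-γ) := by
          have h1 : clow⁻¹ ≤ max (max clow⁻¹ cup) 2 :=
            le_trans (le_max_left _ _) (le_max_left _ _)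
          have h2 : (max (max clow⁻¹ cup) 2)⁻¹ ≤ clow := by
            have h3 := inv_anti₀ (inv_pos.2 hclow) h1
            rwa [inv_inv] at h3
          exact mul_le_mul_of_nonneg_right h2 htneg
      _ ≤ θ t := hlow_total
  · -- UPPER BOUND
    set M := ⌊t/2⌋₊ + 1 with hMdef
    have hM1 : t/2 ≤ (M:ℝ) := by
      have := Nat.lt_floor_add_one (t/2)
      push_cast [hMdef]
      linarith
    have hM2 : (M:ℝ) ≤ t/2 + 1 := by
      have := Nat.floor_le (show (0:ℝ) ≤ t/2 by linarith)
      push_cast [hMdef]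
      linarith
    have hsplit2 := Summable.sum_add_tsum_nat_add
      (f := fun n : ℕ => t ^ n / (n.factorial:ℝ) * (τ (P ^ n)).re) M hSg
    have hhead : ∑ n ∈ Finset.range M, t ^ n / (n.factorial:ℝ) * (τ (P ^ n)).re
        ≤ B * (2^M * Real.exp (t/2)) := by
      calc ∑ n ∈ Finset.range M, t ^ n / (n.factorial:ℝ) * (τ (P ^ n)).re
          ≤ ∑ n ∈ Finset.range M, t ^ n / (n.factorial:ℝ) * B :=
            Finset.sum_le_sum fun n _ =>
              mul_le_mul_of_nonneg_left (hbB n) (by positivity)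
        _ = B * ∑ n ∈ Finset.range M, t ^ n / (n.factorial:ℝ) := by
            rw [Finset.mul_sum]
            exact Finset.sum_congr rfl fun n _ => mul_comm _ _
        _ ≤ B * (2^M * Real.exp (t/2)) :=
            mul_le_mul_of_nonneg_left (myHeadLe t htnn M) hBnn
    have htail2 : ∑' n : ℕ, t ^ (n+M) / ((n+M).factorial:ℝ) * (τ (P ^ (n+M))).re
        ≤ c₂ * (t/2) ^ (-γ) * Real.exp t := by
      have hX : (0:ℝ) ≤ c₂ * (t/2)^(-γ) :=
        mul_nonneg hc₂.le (Real.rpow_nonneg (by linarith) _)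
      have key : ∀ n : ℕ, t ^ (n+M) / ((n+M).factorial:ℝ) * (τ (P ^ (n+M))).re
          ≤ (c₂ * (t/2) ^ (-γ)) * (t ^ (n+M) / ((n+M).factorial:ℝ)) := by
        intro n
        have hnM1 : 1 ≤ n + M := by omega
        have h1 : (τ (P ^ (n+M))).re ≤ c₂ * ((n+M : ℕ):ℝ) ^ (-γ) := hup _ hnM1
        have h2 : ((n+M : ℕ):ℝ) ^ (-γ) ≤ (t/2) ^ (-γ) := by
          apply Real.rpow_le_rpow_of_nonpos (by positivity) ?_ (by linarith)
          have hnn : (M:ℝ) ≤ ((n+M : ℕ):ℝ) := by exact_mod_cast Nat.le_add_left M n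
          linarith
        have h3 : (τ (P ^ (n+M))).re ≤ c₂ * (t/2)^(-γ) :=
          h1.trans (mul_le_mul_of_nonneg_left h2 hc₂.le)
        calc t ^ (n+M) / ((n+M).factorial:ℝ) * (τ (P ^ (n+M))).re
            ≤ t ^ (n+M) / ((n+M).factorial:ℝ) * (c₂ * (t/2)^(-γ)) :=
              mul_le_mul_of_nonneg_left h3 (by positivity)
          _ = (c₂ * (t/2) ^ (-γ)) * (t ^ (n+M) / ((n+M).factorial:ℝ)) := mul_comm _ _
      have hs1 : Summable (fun n : ℕ =>
          t ^ (n+M) / ((n+M).factorial:ℝ) * (τ (P ^ (n+M))).re) :=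
        (summable_nat_add_iff M).2 hSg
      have hs2 : Summable (fun n : ℕ =>
          (c₂ * (t/2)^(-γ)) * (t ^ (n+M) / ((n+M).factorial:ℝ))) :=
        (((summable_nat_add_iff M).2 (Real.summable_pow_div_factorial t)).mul_left _)
      calc ∑' n : ℕ, t ^ (n+M) / ((n+M).factorial:ℝ) * (τ (P ^ (n+M))).re
          ≤ ∑' n : ℕ, (c₂ * (t/2)^(-γ)) * (t ^ (n+M) / ((n+M).factorial:ℝ)) :=
            Summable.tsum_le_tsum key hs1 hs2
        _ = (c₂ * (t/2)^(-γ)) * ∑' n : ℕ, t ^ (n+M) / ((n+M).factorial:ℝ) := tsum_mul_left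
        _ ≤ c₂ * (t/2) ^ (-γ) * Real.exp t :=
            mul_le_mul_of_nonneg_left (myTailLe t htnn M) hX
    -- absorb the head term
    have hP1 : 2*B*Real.exp (-((1-Real.log 2)/2)*t) ≤ t ^ (-γ) := by
      have htγ : 0 < t ^ γ := Real.rpow_pos_of_pos ht0 γ
      have hkey : 2*B*(t^γ * Real.exp (-((1-Real.log 2)/2)*t)) ≤ 2*B*(1/(4*(B+1))) :=
        mul_le_mul_of_nonneg_left hE3t (by linarith)
      have h2B : 2*B*(1/(4*(B+1))) ≤ 1 := by
        have hd : (0:ℝ) < 4*(B+1) := by linarith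
        rw [mul_one_div, div_le_one hd]
        linarith
      rw [Real.rpow_neg htnn, inv_eq_one_div, le_div_iff₀ htγ]
      nlinarith
    have hhead' : Real.exp (-t) * (B * (2^M * Real.exp (t/2))) ≤ t ^ (-γ) := by
      have h2M : (2:ℝ)^M ≤ Real.exp ((t/2+1)*Real.log 2) := by
        have he : (2:ℝ)^M = Real.exp ((M:ℕ) * Real.log 2) := by
          rw [Real.exp_nat_mul, Real.exp_log (by norm_num : (0:ℝ) < 2)]
        rw [he]
        apply Real.exp_le_exp.2
        have hlog2 : (0:ℝ) < Real.log 2 := Real.log_pos one_lt_two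
        nlinarith
      calc Real.exp (-t) * (B * (2^M * Real.exp (t/2)))
          ≤ Real.exp (-t) * (B * (Real.exp ((t/2+1)*Real.log 2) * Real.exp (t/2))) := by
            apply mul_le_mul_of_nonneg_left ?_ (Real.exp_nonneg _)
            apply mul_le_mul_of_nonneg_left ?_ hBnn
            exact mul_le_mul_of_nonneg_right h2M (Real.exp_nonneg _)
        _ = 2*B*Real.exp (-((1-Real.log 2)/2)*t) := by
            rw [show Real.exp (-t) * (B * (Real.exp ((t/2+1)*Real.log 2) * Real.exp (t/2)))
              = B * (Real.exp (-t) * Real.exp ((t/2+1)*Real.log 2) * Real.exp (t/2)) from by ring,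
              ← Real.exp_add, ← Real.exp_add,
              show -t + (t/2+1)*Real.log 2 + t/2
                = Real.log 2 + -((1-Real.log 2)/2)*t from by ring,
              Real.exp_add, Real.exp_log two_pos]
            ring
        _ ≤ t ^ (-γ) := hP1
    have htail' : Real.exp (-t) * (c₂ * (t/2) ^ (-γ) * Real.exp t)
        = c₂ * ((2:ℝ)^γ * t ^ (-γ)) := by
      have hdiv : (t/2 : ℝ) ^ (-γ) = t ^ (-γ) * (2:ℝ)^γ := by
        rw [div_eq_mul_inv, Real.mul_rpow htnn (by norm_num : (0:ℝ) ≤ 2⁻¹),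
          Real.inv_rpow (by norm_num : (0:ℝ) ≤ 2), ← Real.rpow_neg (by norm_num : (0:ℝ) ≤ 2),
          neg_neg]
      calc Real.exp (-t) * (c₂ * (t/2) ^ (-γ) * Real.exp t)
          = (c₂ * (t/2) ^ (-γ)) * (Real.exp (-t) * Real.exp t) := by ring
        _ = c₂ * ((2:ℝ)^γ * t ^ (-γ)) := by
            rw [← Real.exp_add, neg_add_cancel, Real.exp_zero, mul_one, hdiv]
            ring
    rw [hθ t, ← hsplit2, mul_add]
    calc Real.exp (-t) * (∑ n ∈ Finset.range M, t ^ n / (n.factorial:ℝ) * (τ (P ^ n)).re)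
          + Real.exp (-t) * ∑' n : ℕ, t ^ (n+M) / ((n+M).factorial:ℝ) * (τ (P ^ (n+M))).re
        ≤ t ^ (-γ) + c₂ * ((2:ℝ)^γ * t ^ (-γ)) := by
          have ha : Real.exp (-t) * (∑ n ∈ Finset.range M, t ^ n / (n.factorial:ℝ)
              * (τ (P ^ n)).re) ≤ t ^ (-γ) :=
            le_trans (mul_le_mul_of_nonneg_left hhead (Real.exp_nonneg _)) hhead'
          have hb : Real.exp (-t) * ∑' n : ℕ, t ^ (n+M) / ((n+M).factorial:ℝ)
              * (τ (P ^ (n+M))).re ≤ c₂ * ((2:ℝ)^γ * t ^ (-γ)) := by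
            refine le_trans (mul_le_mul_of_nonneg_left htail2 (Real.exp_nonneg _)) ?_
            rw [htail']
          exact add_le_add ha hb
      _ = cup * t ^ (-γ) := by rw [hcupdef]; ring
      _ ≤ max (max clow⁻¹ cup) 2 * t ^ (-γ) :=
          mul_le_mul_of_nonneg_right
            (le_trans (le_max_right _ _) (le_max_left _ _)) htneg
end

section
/- Let a_n ≥ 0 be a sequence with a_0 = 1, a_n ≤ 1 for all n, and suppose a_n + a_{n+1} ≥ c₁ n^{-γ} for all n ≥ 1, where c₁ > 0 and γ > 0. Define ψ(t) = Σ_{n=0}^∞ (t^n/n!) a_n. Then there exists c' > 0 such that ψ(t) + ψ'(t) ≥ c' e^t t^{-γ} for all sufficiently large t. -/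
/-!
The weights `t ^ n / n !` are an unnormalised Poisson distribution with mean and variance `t`:
their second central moment is `t * exp t`, so by Chebyshev the indices outside the window
`0 < n < 2 t` carry mass at most `exp t / t ≤ exp t / 2`. On the window
`a n + a (n + 1) ≥ c₁ n ^ (-γ) ≥ c₁ (2 t) ^ (-γ)`, which gives the bound with
`c' = c₁ 2 ^ (-γ) / 2`.
-/

open Real Finset
open scoped Nat

lemma hasSum_pow_div_factorial (t : ℝ) : HasSum (fun n : ℕ => t ^ n / n !) (exp t) :=
  exp_eq_exp_ℝ ▸ NormedSpace.expSeries_div_hasSum_exp t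

lemma hasSum_descFactorial_mul_pow_div_factorial (t : ℝ) (k : ℕ) :
    HasSum (fun n : ℕ => (n.descFactorial k : ℝ) * (t ^ n / n !)) (t ^ k * exp t) := by
  rw [← hasSum_nat_add_iff' k]
  have hinitial : ∑ n ∈ range k, (n.descFactorial k : ℝ) * (t ^ n / n !) = 0 :=
    sum_eq_zero fun n hn => by
      rw [Nat.descFactorial_eq_zero_iff_lt.mpr (mem_range.mp hn)]
      simp
  rw [hinitial, sub_zero]
  refine ((hasSum_pow_div_factorial t).mul_left (t ^ k)).congr_fun fun n => ?_
  have hfact : ((n + k)! : ℝ) = n ! * (n + k).descFactorial k := by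
    exact_mod_cast
      (Nat.add_sub_cancel n k ▸ Nat.factorial_mul_descFactorial (Nat.le_add_left k n)).symm
  rw [hfact, pow_add]
  field_simp

lemma hasSum_sq_sub_mul_pow_div_factorial (t : ℝ) :
    HasSum (fun n : ℕ => ((n : ℝ) - t) ^ 2 * (t ^ n / n !)) (t * exp t) := by
  have h := (hasSum_descFactorial_mul_pow_div_factorial t 2).add
    (((hasSum_descFactorial_mul_pow_div_factorial t 1).mul_left (1 - 2 * t)).add
      ((hasSum_descFactorial_mul_pow_div_factorial t 0).mul_left (t ^ 2)))
  convert h using 1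
  · funext n
    -- `(n - t) ^ 2 = n (n - 1) + (1 - 2 t) n + t ^ 2`
    simp only [Nat.cast_descFactorial_two, Nat.descFactorial_one, Nat.descFactorial_zero]
    push_cast
    ring
  · ring

lemma tsum_compl_pow_div_factorial_le {t r : ℝ} (ht : 0 ≤ t) (hr : 0 < r) (s : Finset ℕ)
    (hs : ∀ n ∉ s, r ≤ |(n : ℝ) - t|) :
    ∑' n : ↑(↑s : Set ℕ)ᶜ, t ^ (n : ℕ) / (n : ℕ)! ≤ t * exp t / r ^ 2 := by
  have hnonneg : ∀ n : ℕ, 0 ≤ t ^ n / n ! := fun n => by positivity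
  have hsq := hasSum_sq_sub_mul_pow_div_factorial t
  have hpoint : ∀ n : ↑(↑s : Set ℕ)ᶜ,
      r ^ 2 * (t ^ (n : ℕ) / (n : ℕ)!) ≤
        (((n : ℕ) : ℝ) - t) ^ 2 * (t ^ (n : ℕ) / (n : ℕ)!) := by
    rintro ⟨n, hn⟩
    refine mul_le_mul_of_nonneg_right ?_ (hnonneg n)
    rw [← sq_abs ((n : ℝ) - t)]
    exact pow_le_pow_left₀ hr.le (hs n hn) 2
  rw [le_div_iff₀ (by positivity), mul_comm, ← tsum_mul_left, ← hsq.tsum_eq]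
  calc ∑' n : ↑(↑s : Set ℕ)ᶜ, r ^ 2 * (t ^ (n : ℕ) / (n : ℕ)!)
      ≤ ∑' n : ↑(↑s : Set ℕ)ᶜ,
          (((n : ℕ) : ℝ) - t) ^ 2 * (t ^ (n : ℕ) / (n : ℕ)!) :=
        Summable.tsum_le_tsum hpoint
          (((Real.summable_pow_div_factorial t).mul_left _).subtype _) (hsq.summable.subtype _)
    _ ≤ ∑' n : ℕ, ((n : ℝ) - t) ^ 2 * (t ^ n / n !) :=
        hsq.summable.tsum_subtype_le _ _ fun n => mul_nonneg (sq_nonneg _) (hnonneg n)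

lemma exp_div_two_le_sum_Ioo_pow_div_factorial {t : ℝ} (ht : 2 ≤ t) :
    exp t / 2 ≤ ∑ n ∈ Ioo 0 ⌈2 * t⌉₊, t ^ n / n ! := by
  have ht0 : 0 < t := by linarith
  have hfar : ∀ n ∉ Ioo 0 ⌈2 * t⌉₊, t ≤ |(n : ℝ) - t| := by
    intro n hn
    rw [mem_Ioo, Nat.lt_ceil, not_and_or, not_lt, not_lt] at hn
    rcases hn with hn | hn
    · simp [Nat.le_zero.mp hn, abs_of_pos ht0]
    · rw [abs_of_nonneg (by linarith)]
      linarith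
  have htail := tsum_compl_pow_div_factorial_le ht0.le ht0 _ hfar
  have hsplit := (Real.summable_pow_div_factorial t).sum_add_tsum_compl (s := Ioo 0 ⌈2 * t⌉₊)
  rw [(hasSum_pow_div_factorial t).tsum_eq] at hsplit
  have hexp : t * exp t / t ^ 2 ≤ exp t / 2 := by
    rw [pow_two, mul_div_mul_left _ _ ht0.ne']
    exact div_le_div_of_nonneg_left (exp_pos t).le two_pos ht
  linarith

lemma summable_pow_div_factorial_mul_of_abs_le {b : ℕ → ℝ} {C : ℝ} (t : ℝ)
    (hb : ∀ n, |b n| ≤ C) : Summable (fun n : ℕ => t ^ n / n ! * b n) := by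
  refine .of_norm_bounded ((Real.summable_pow_div_factorial |t|).mul_right C) fun n => ?_
  rw [norm_mul, Real.norm_eq_abs, Real.norm_eq_abs, abs_div, abs_pow, Nat.abs_cast]
  exact mul_le_mul_of_nonneg_left (hb n) (by positivity)

lemma mul_exp_div_two_le_tsum_pow_div_factorial_mul {b : ℕ → ℝ} {m C t : ℝ} (ht : 2 ≤ t)
    (hm : 0 ≤ m) (hb0 : ∀ n, 0 ≤ b n) (hbC : ∀ n, b n ≤ C)
    (hbm : ∀ n ∈ Ioo 0 ⌈2 * t⌉₊, m ≤ b n) :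
    m * (exp t / 2) ≤ ∑' n : ℕ, t ^ n / n ! * b n := by
  have hterm : ∀ n, 0 ≤ t ^ n / n ! := fun n => by positivity
  have hsum := summable_pow_div_factorial_mul_of_abs_le t fun n =>
    abs_le.mpr ⟨by linarith [hb0 n, hb0 0, hbC 0], hbC n⟩
  calc m * (exp t / 2) ≤ m * ∑ n ∈ Ioo 0 ⌈2 * t⌉₊, t ^ n / n ! :=
        mul_le_mul_of_nonneg_left (exp_div_two_le_sum_Ioo_pow_div_factorial ht) hm
    _ ≤ ∑ n ∈ Ioo 0 ⌈2 * t⌉₊, t ^ n / n ! * b n := by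
        rw [mul_sum]
        exact sum_le_sum fun n hn => by
          rw [mul_comm]; exact mul_le_mul_of_nonneg_left (hbm n hn) (hterm n)
    _ ≤ ∑' n : ℕ, t ^ n / n ! * b n :=
        hsum.sum_le_tsum _ fun n _ => mul_nonneg (hterm n) (hb0 n)

theorem stmt16_general (γ : ℝ) (hγ : 0 < γ) (c₁ : ℝ) (hc₁ : 0 < c₁)
    (a : ℕ → ℝ) (hann : ∀ n, 0 ≤ a n) (ha1 : ∀ n, a n ≤ 1)
    (hlow : ∀ n : ℕ, 1 ≤ n → c₁ * (n : ℝ) ^ (-γ) ≤ a n + a (n + 1)) :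
    ∃ c' : ℝ, 0 < c' ∧ ∃ T : ℝ, ∀ t : ℝ, T ≤ t →
      c' * Real.exp t * t ^ (-γ) ≤
        (∑' n : ℕ, t ^ n / (n.factorial : ℝ) * a n) +
        (∑' n : ℕ, t ^ n / (n.factorial : ℝ) * a (n + 1)) := by
  refine ⟨c₁ * 2 ^ (-γ) / 2, by positivity, 2, fun t ht => ?_⟩
  have ht0 : 0 < t := by linarith
  have habs : ∀ n, |a n| ≤ 1 := fun n => abs_le.mpr ⟨by linarith [hann n], ha1 n⟩
  have hwindow : ∀ n ∈ Ioo 0 ⌈2 * t⌉₊, c₁ * (2 * t) ^ (-γ) ≤ a n + a (n + 1) := by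
    intro n hn
    rw [mem_Ioo, Nat.lt_ceil] at hn
    exact (mul_le_mul_of_nonneg_left (rpow_le_rpow_of_nonpos (by exact_mod_cast hn.1) hn.2.le
      (neg_nonpos.mpr hγ.le)) hc₁.le).trans (hlow n hn.1)
  rw [← (summable_pow_div_factorial_mul_of_abs_le t habs).tsum_add
    (summable_pow_div_factorial_mul_of_abs_le t fun n => habs (n + 1))]
  simp_rw [← mul_add]
  calc c₁ * 2 ^ (-γ) / 2 * exp t * t ^ (-γ) = c₁ * (2 * t) ^ (-γ) * (exp t / 2) := by
        rw [mul_rpow zero_le_two ht0.le]; ring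
    _ ≤ _ := mul_exp_div_two_le_tsum_pow_div_factorial_mul ht (by positivity)
        (fun n => add_nonneg (hann n) (hann (n + 1))) (fun n => add_le_add (ha1 n) (ha1 (n + 1)))
        hwindow

/-- If `a_n ∈ [0,1]`, `a_0 = 1`, and `a_n + a_{n+1} ≥ c₁ n^{-γ}` for `n ≥ 1`, then with
`ψ(t) = Σ_n (t^n/n!) a_n` (so `ψ'(t) = Σ_n (t^n/n!) a_{n+1}`), there is `c' > 0` with
`ψ(t) + ψ'(t) ≥ c' e^t t^{-γ}` for all sufficiently large `t`. -/
theorem stmt16 (γ : ℝ) (hγ : 0 < γ) (c₁ : ℝ) (hc₁ : 0 < c₁)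
    (a : ℕ → ℝ) (ha0 : a 0 = 1) (hann : ∀ n, 0 ≤ a n) (ha1 : ∀ n, a n ≤ 1)
    (hlow : ∀ n : ℕ, 1 ≤ n → c₁ * (n : ℝ) ^ (-γ) ≤ a n + a (n + 1)) :
    ∃ c' : ℝ, 0 < c' ∧ ∃ T : ℝ, ∀ t : ℝ, T ≤ t →
      c' * Real.exp t * t ^ (-γ) ≤
        (∑' n : ℕ, t ^ n / (n.factorial : ℝ) * a n) +
        (∑' n : ℕ, t ^ n / (n.factorial : ℝ) * a (n + 1)) :=
  stmt16_general γ hγ c₁ hc₁ a hann ha1 hlow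
end
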